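/- For every n ≥ 1 and every integer m with 0 ≤ m ≤ 2^{n−1}, there exists a minimum-width m-partition of the symbol nodes of the n-polar decoding graph P_n in which every bowtie is either a split bowtie or a contained bowtie (i.e., no bowtie is a crossing bowtie). -/

import Mathlib

/-- Vertex type of the polar decoding graph `P_{k+1}`.  `PV 0` is the vertex type of
`P_1` (two symbol nodes and two right-hand nodes), and the vertices of `P_{k+2}` are
`2^(k+2)` new symbol nodes together with two disjoint copies of the vertices of
`P_{k+1}`. -/
def PV : ℕ → Type
  | 0 => Fin 2 ⊕ Fin 2
  | k + 1 => Fin (2 ^ (k + 2)) ⊕ (PV k ⊕ PV k)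

/-- The `i`-th symbol node of `P_{k+1}` (there are `2^(k+1)` of them). -/
def sym : (k : ℕ) → Fin (2 ^ (k + 1)) → PV k
  | 0, i => Sum.inl i
  | _ + 1, i => Sum.inl i

/-- The polar decoding graph `P_{k+1}` on vertex type `PV k`.  `P_1` is the complete
bipartite graph `K_{2,2}` whose two left vertices are its symbol nodes.  `P_{k+2}`
consists of `2^(k+2)` symbol nodes together with two copies of `P_{k+1}`; the symbol
nodes `a_{2i}` and `a_{2i+1}` (0-indexed) are joined to the `i`-th symbol node of each
copy, giving the `i`-th bowtie. -/
def PG : (k : ℕ) → SimpleGraph (PV k)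
  | 0 => SimpleGraph.fromRel (fun u v => u.isLeft ∧ v.isRight)
  | k + 1 =>
    SimpleGraph.fromRel (fun u v =>
      match u, v with
      | Sum.inl j, Sum.inr w =>
          ∃ i : Fin (2 ^ (k + 1)), (j : ℕ) / 2 = (i : ℕ) ∧
            (w = Sum.inl (sym k i) ∨ w = Sum.inr (sym k i))
      | Sum.inr (Sum.inl a), Sum.inr (Sum.inl b) => (PG k).Adj a b
      | Sum.inr (Sum.inr a), Sum.inr (Sum.inr b) => (PG k).Adj a b
      | _, _ => False)

/-- The width of the partition `(A, Aᶜ)` of the vertices of `G`: the number of edges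
of `G` with one endpoint in `A` and the other outside `A`. -/
noncomputable def partWidth {V : Type} (G : SimpleGraph V) (A : Set V) : ℕ :=
  {p : V × V | p.1 ∈ A ∧ p.2 ∉ A ∧ G.Adj p.1 p.2}.ncard


/-- The first symbol node `a_{2i-1}` (0-indexed: `a_{2i}`) of the `i`-th bowtie of `P_{k+1}`. -/
def bowtieA1 (k : ℕ) (i : Fin (2 ^ k)) : PV k :=
  sym k ⟨2 * i, by have := i.isLt; rw [pow_succ]; omega⟩

/-- The second symbol node `a_{2i}` (0-indexed: `a_{2i+1}`) of the `i`-th bowtie of `P_{k+1}`. -/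
def bowtieA2 (k : ℕ) (i : Fin (2 ^ k)) : PV k :=
  sym k ⟨2 * i + 1, by have := i.isLt; rw [pow_succ]; omega⟩

/-- The node `b_i` of the `i`-th bowtie: the `i`-th symbol node of the first copy of
`P_k` inside `P_{k+1}` (for `P_1`, the first right-hand vertex of `K_{2,2}`). -/
def bowtieB : (k : ℕ) → Fin (2 ^ k) → PV k
  | 0, _ => Sum.inr 0
  | k + 1, i => Sum.inr (Sum.inl (sym k i))

/-- The node `c_i` of the `i`-th bowtie: the `i`-th symbol node of the second copy of
`P_k` inside `P_{k+1}` (for `P_1`, the second right-hand vertex of `K_{2,2}`). -/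
def bowtieC : (k : ℕ) → Fin (2 ^ k) → PV k
  | 0, _ => Sum.inr 1
  | k + 1, i => Sum.inr (Sum.inr (sym k i))

/-- Relative to the partition `(A, Aᶜ)`, the `i`-th bowtie is *split* if its two symbol
nodes lie on opposite sides of the partition. -/
def SplitBowtie (k : ℕ) (i : Fin (2 ^ k)) (A : Set (PV k)) : Prop :=
  (bowtieA1 k i ∈ A ∧ bowtieA2 k i ∉ A) ∨ (bowtieA1 k i ∉ A ∧ bowtieA2 k i ∈ A)

/-- Relative to the partition `(A, Aᶜ)`, the `i`-th bowtie is *contained* if all four of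
its vertices lie on the same side of the partition. -/
def ContainedBowtie (k : ℕ) (i : Fin (2 ^ k)) (A : Set (PV k)) : Prop :=
  (bowtieA1 k i ∈ A ∧ bowtieA2 k i ∈ A ∧ bowtieB k i ∈ A ∧ bowtieC k i ∈ A) ∨
    (bowtieA1 k i ∉ A ∧ bowtieA2 k i ∉ A ∧ bowtieB k i ∉ A ∧ bowtieC k i ∉ A)

/-!
Among the minimum-width `m`-partitions take one with the fewest misaligned nodes, i.e. nodes `b_i`
or `c_i` whose bowtie has both symbol nodes on the side opposite to them. A misaligned node is not a
symbol node and has degree at most four, two of its neighbours (`a_{2i-1}`, `a_{2i}`) lying on the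
other side; so moving it across keeps an `m`-partition and does not increase the width. Since the
node belongs to a single bowtie, the move realigns it and changes no other node's alignment,
contradicting minimality. Hence there is no misaligned node, that is, no crossing bowtie.
-/

section Cut

variable {V : Type} (G : SimpleGraph V)

def oppositeNeighborSet (A : Set V) (v : V) : Set V :=
  {u ∈ G.neighborSet v | u ∈ A ↔ v ∉ A}

lemma ncard_cut_inter_incident (A : Set V) (v : V) :
    ({p : V × V | p.1 ∈ A ∧ p.2 ∉ A ∧ G.Adj p.1 p.2} ∩ {p | p.1 = v ∨ p.2 = v}).ncard =
      (oppositeNeighborSet G A v).ncard := by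
  by_cases hv : v ∈ A
  · have : {p : V × V | p.1 ∈ A ∧ p.2 ∉ A ∧ G.Adj p.1 p.2} ∩ {p | p.1 = v ∨ p.2 = v} =
        Prod.mk v '' oppositeNeighborSet G A v := by
      ext ⟨x, y⟩
      simp only [oppositeNeighborSet, Set.mem_inter_iff, Set.mem_ofPred_eq, Set.mem_image,
        SimpleGraph.mem_neighborSet, Prod.mk.injEq]
      constructor
      · rintro ⟨⟨hx, hy, hxy⟩, rfl | rfl⟩
        · exact ⟨y, ⟨hxy, by tauto⟩, rfl, rfl⟩
        · exact absurd hv hy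
      · rintro ⟨u, ⟨hvu, hu⟩, rfl, rfl⟩
        exact ⟨⟨hv, by tauto, hvu⟩, Or.inl rfl⟩
    rw [this, Set.ncard_image_of_injective _ (Prod.mk_right_injective v)]
  · have : {p : V × V | p.1 ∈ A ∧ p.2 ∉ A ∧ G.Adj p.1 p.2} ∩ {p | p.1 = v ∨ p.2 = v} =
        (·, v) '' oppositeNeighborSet G A v := by
      ext ⟨x, y⟩
      simp only [oppositeNeighborSet, Set.mem_inter_iff, Set.mem_ofPred_eq, Set.mem_image,
        SimpleGraph.mem_neighborSet, Prod.mk.injEq]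
      constructor
      · rintro ⟨⟨hx, hy, hxy⟩, rfl | rfl⟩
        · exact absurd hx hv
        · exact ⟨x, ⟨hxy.symm, by tauto⟩, rfl, rfl⟩
      · rintro ⟨u, ⟨hvu, hu⟩, rfl, rfl⟩
        exact ⟨⟨by tauto, hv, hvu.symm⟩, Or.inr rfl⟩
    rw [this, Set.ncard_image_of_injective _ (Prod.mk_left_injective v)]

lemma cut_diff_incident_symmDiff_singleton (A : Set V) (v : V) :
    {p : V × V | p.1 ∈ symmDiff A {v} ∧ p.2 ∉ symmDiff A {v} ∧ G.Adj p.1 p.2} \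
        {p | p.1 = v ∨ p.2 = v} =
      {p : V × V | p.1 ∈ A ∧ p.2 ∉ A ∧ G.Adj p.1 p.2} \ {p | p.1 = v ∨ p.2 = v} := by
  ext ⟨x, y⟩
  simp only [Set.mem_sdiff, Set.mem_ofPred_eq, Set.mem_symmDiff, Set.mem_singleton_iff, not_or]
  tauto

lemma oppositeNeighborSet_symmDiff_singleton (A : Set V) (v : V) :
    oppositeNeighborSet G (symmDiff A {v}) v = G.neighborSet v \ oppositeNeighborSet G A v := by
  ext u
  have hne : u ∈ G.neighborSet v → u ≠ v := fun h he => G.irrefl (he ▸ h)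
  simp only [oppositeNeighborSet, Set.mem_sdiff, Set.mem_ofPred_eq, Set.mem_symmDiff,
    Set.mem_singleton_iff]
  tauto

variable [Finite V]

lemma partWidth_eq_add_ncard_oppositeNeighborSet (A : Set V) (v : V) :
    partWidth G A = ({p : V × V | p.1 ∈ A ∧ p.2 ∉ A ∧ G.Adj p.1 p.2} \
      {p | p.1 = v ∨ p.2 = v}).ncard + (oppositeNeighborSet G A v).ncard := by
  rw [← ncard_cut_inter_incident, add_comm, Set.ncard_inter_add_ncard_sdiff_eq_ncard]
  rfl

lemma partWidth_symmDiff_singleton_le {A : Set V} {v : V}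
    (h : (G.neighborSet v).ncard ≤ 2 * (oppositeNeighborSet G A v).ncard) :
    partWidth G (symmDiff A {v}) ≤ partWidth G A := by
  have hsub : oppositeNeighborSet G A v ⊆ G.neighborSet v := fun _ hu => hu.1
  rw [partWidth_eq_add_ncard_oppositeNeighborSet G _ v,
    partWidth_eq_add_ncard_oppositeNeighborSet G A v, cut_diff_incident_symmDiff_singleton,
    oppositeNeighborSet_symmDiff_singleton, Set.ncard_sdiff hsub]
  omega

end Cut

instance finitePV : ∀ k, Finite (PV k)
  | 0 => inferInstanceAs (Finite (Fin 2 ⊕ Fin 2))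
  | k + 1 => have := finitePV k; inferInstanceAs (Finite (Fin (2 ^ (k + 2)) ⊕ (PV k ⊕ PV k)))

lemma sym_injective (k : ℕ) : Function.Injective (sym k) := by
  cases k <;> exact Sum.inl_injective

lemma sym_ne_bowtieB (k : ℕ) (j : Fin (2 ^ (k + 1))) (i : Fin (2 ^ k)) :
    sym k j ≠ bowtieB k i := by
  cases k <;> exact Sum.inl_ne_inr

lemma sym_ne_bowtieC (k : ℕ) (j : Fin (2 ^ (k + 1))) (i : Fin (2 ^ k)) :
    sym k j ≠ bowtieC k i := by
  cases k <;> exact Sum.inl_ne_inr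

lemma bowtieB_injective (k : ℕ) : Function.Injective (bowtieB k) := by
  cases k with
  | zero => exact fun i j _ => Subsingleton.elim (α := Fin 1) i j
  | succ k => exact fun i j h => sym_injective k (Sum.inl_injective (Sum.inr_injective h))

lemma bowtieC_injective (k : ℕ) : Function.Injective (bowtieC k) := by
  cases k with
  | zero => exact fun i j _ => Subsingleton.elim (α := Fin 1) i j
  | succ k => exact fun i j h => sym_injective k (Sum.inr_injective (Sum.inr_injective h))

lemma bowtieB_ne_bowtieC (k : ℕ) (i j : Fin (2 ^ k)) : bowtieB k i ≠ bowtieC k j := by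
  cases k with
  | zero => exact fun h => absurd (Sum.inr_injective h) (by decide)
  | succ k => exact fun h => Sum.inl_ne_inr (Sum.inr_injective h)

lemma bowtieA1_ne_bowtieA2 (k : ℕ) (i : Fin (2 ^ k)) : bowtieA1 k i ≠ bowtieA2 k i := by
  intro h
  have := congrArg Fin.val (sym_injective k h)
  simp at this

def half {k : ℕ} (j : Fin (2 ^ (k + 1))) : Fin (2 ^ k) :=
  ⟨j / 2, Nat.div_lt_of_lt_mul (by simpa [pow_succ, mul_comm] using j.isLt)⟩

lemma half_eq_iff {k : ℕ} (j : Fin (2 ^ (k + 1))) (i : Fin (2 ^ k)) :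
    half j = i ↔ sym k j = bowtieA1 k i ∨ sym k j = bowtieA2 k i := by
  simp only [bowtieA1, bowtieA2, (sym_injective k).eq_iff, Fin.ext_iff, half]
  omega

lemma adj_sym_iff (k : ℕ) (j : Fin (2 ^ (k + 1))) (w : PV k) :
    (PG k).Adj (sym k j) w ↔ w = bowtieB k (half j) ∨ w = bowtieC k (half j) := by
  cases k with
  | zero =>
    change (SimpleGraph.fromRel _).Adj _ _ ↔ _
    rw [SimpleGraph.fromRel_adj]
    constructor
    · rintro ⟨-, h | h⟩
      · rcases w with w | w
        · exact absurd h.2 Bool.false_ne_true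
        · fin_cases w
          exacts [Or.inl rfl, Or.inr rfl]
      · exact absurd h.2 Bool.false_ne_true
    · rintro (rfl | rfl) <;> exact ⟨Sum.inl_ne_inr, Or.inl ⟨rfl, rfl⟩⟩
  | succ k =>
    change (SimpleGraph.fromRel _).Adj _ _ ↔ _
    rw [SimpleGraph.fromRel_adj]
    constructor
    · rintro ⟨-, h | h⟩
      · rcases w with _ | w
        · exact h.elim
        · obtain ⟨i, hi, h⟩ := h
          obtain rfl : i = half j := Fin.ext hi.symm
          exact h.imp (congrArg Sum.inr) (congrArg Sum.inr)
      · rcases w with _ | _ | _ <;> exact h.elim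
    · rintro (rfl | rfl)
      exacts [⟨Sum.inl_ne_inr, Or.inl ⟨half j, rfl, Or.inl rfl⟩⟩,
        ⟨Sum.inl_ne_inr, Or.inl ⟨half j, rfl, Or.inr rfl⟩⟩]

section BowtieSide

variable {k : ℕ} {v : PV k} {i : Fin (2 ^ k)}

lemma eq_of_bowtieB_or_bowtieC {j : Fin (2 ^ k)} (hi : v = bowtieB k i ∨ v = bowtieC k i)
    (hj : v = bowtieB k j ∨ v = bowtieC k j) : i = j := by
  rcases hi with rfl | rfl <;> rcases hj with h | h
  · exact bowtieB_injective k h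
  · exact absurd h (bowtieB_ne_bowtieC k i j)
  · exact absurd h.symm (bowtieB_ne_bowtieC k j i)
  · exact bowtieC_injective k h

lemma adj_sym_iff_half_eq (hv : v = bowtieB k i ∨ v = bowtieC k i) (j : Fin (2 ^ (k + 1))) :
    (PG k).Adj (sym k j) v ↔ half j = i := by
  rw [adj_sym_iff]
  exact ⟨fun h => eq_of_bowtieB_or_bowtieC h hv, fun h => h ▸ hv⟩

lemma exists_nonsymbol_neighbors (hv : v = bowtieB k i ∨ v = bowtieC k i) :
    ∃ x y : PV k, ∀ w ∉ Set.range (sym k), (PG k).Adj v w → w = x ∨ w = y := by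
  cases k with
  | zero =>
    refine ⟨v, v, fun w hw hadj => absurd hadj ?_⟩
    change ¬(SimpleGraph.fromRel _).Adj _ _
    rw [SimpleGraph.fromRel_adj]
    rcases w with w | w
    · exact absurd ⟨w, rfl⟩ hw
    · rcases hv with rfl | rfl <;> exact fun h => Bool.false_ne_true (h.2.elim (·.1) (·.1))
  | succ k =>
    have hsym : ∀ w, (PG k).Adj (sym k i) w ∨ (PG k).Adj w (sym k i) →
        w = bowtieB k (half i) ∨ w = bowtieC k (half i) := fun w h =>
      (adj_sym_iff k i w).1 (h.elim id (·.symm))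
    rcases hv with rfl | rfl
    · refine ⟨Sum.inr (Sum.inl (bowtieB k (half i))), Sum.inr (Sum.inl (bowtieC k (half i))),
        fun w hw hadj => ?_⟩
      change (SimpleGraph.fromRel _).Adj _ _ at hadj
      rw [SimpleGraph.fromRel_adj] at hadj
      rcases w with w | w | w
      · exact absurd ⟨w, rfl⟩ hw
      · rcases hsym w hadj.2 with rfl | rfl
        exacts [Or.inl rfl, Or.inr rfl]
      · exact hadj.2.elim False.elim False.elim
    · refine ⟨Sum.inr (Sum.inr (bowtieB k (half i))), Sum.inr (Sum.inr (bowtieC k (half i))),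
        fun w hw hadj => ?_⟩
      change (SimpleGraph.fromRel _).Adj _ _ at hadj
      rw [SimpleGraph.fromRel_adj] at hadj
      rcases w with w | w | w
      · exact absurd ⟨w, rfl⟩ hw
      · exact hadj.2.elim False.elim False.elim
      · rcases hsym w hadj.2 with rfl | rfl
        exacts [Or.inl rfl, Or.inr rfl]

lemma sym_ne_of_bowtieB_or_bowtieC (hv : v = bowtieB k i ∨ v = bowtieC k i)
    (j : Fin (2 ^ (k + 1))) : sym k j ≠ v := by
  rcases hv with rfl | rfl
  exacts [sym_ne_bowtieB k j i, sym_ne_bowtieC k j i]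

lemma bowtieA1_adj (hv : v = bowtieB k i ∨ v = bowtieC k i) : (PG k).Adj (bowtieA1 k i) v :=
  (adj_sym_iff_half_eq hv _).2 ((half_eq_iff _ _).2 (Or.inl rfl))

lemma bowtieA2_adj (hv : v = bowtieB k i ∨ v = bowtieC k i) : (PG k).Adj (bowtieA2 k i) v :=
  (adj_sym_iff_half_eq hv _).2 ((half_eq_iff _ _).2 (Or.inr rfl))

lemma ncard_neighborSet_le_four (hv : v = bowtieB k i ∨ v = bowtieC k i) :
    ((PG k).neighborSet v).ncard ≤ 4 := by
  obtain ⟨x, y, hxy⟩ := exists_nonsymbol_neighbors hv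
  have hsub : (PG k).neighborSet v ⊆ {bowtieA1 k i, bowtieA2 k i, x, y} := by
    intro w hw
    by_cases hsym : w ∈ Set.range (sym k)
    · obtain ⟨j, rfl⟩ := hsym
      rcases (half_eq_iff j i).1 ((adj_sym_iff_half_eq hv j).1 hw.symm) with h | h <;> simp [h]
    · rcases hxy w hsym hw with rfl | rfl <;> simp
  have h₁ := Set.ncard_insert_le (bowtieA1 k i) {bowtieA2 k i, x, y}
  have h₂ := Set.ncard_insert_le (bowtieA2 k i) {x, y}
  have h₃ := Set.ncard_insert_le x {y}
  rw [Set.ncard_singleton] at h₃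
  have := Set.ncard_le_ncard hsub
  omega

end BowtieSide

/-- A bowtie is crossing exactly when one of its nodes `b_i`, `c_i` lies in this set. -/
def misalignedNodes (k : ℕ) (A : Set (PV k)) : Set (PV k) :=
  {v | ∃ i, (v = bowtieB k i ∨ v = bowtieC k i) ∧ (bowtieA1 k i ∈ A ↔ bowtieA2 k i ∈ A) ∧
    (v ∈ A ↔ bowtieA1 k i ∉ A)}

section Misaligned

variable {k : ℕ} {A : Set (PV k)} {v : PV k}

lemma splitBowtie_or_containedBowtie (h : misalignedNodes k A = ∅) (i : Fin (2 ^ k)) :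
    SplitBowtie k i A ∨ ContainedBowtie k i A := by
  have aligned : ∀ w, (w = bowtieB k i ∨ w = bowtieC k i) →
      (bowtieA1 k i ∈ A ↔ bowtieA2 k i ∈ A) → (w ∈ A ↔ bowtieA1 k i ∈ A) := fun w hw h12 => by
    by_contra hwa
    exact Set.eq_empty_iff_forall_notMem.1 h w ⟨i, hw, h12, by tauto⟩
  by_cases h12 : bowtieA1 k i ∈ A ↔ bowtieA2 k i ∈ A
  · have hB := aligned _ (Or.inl rfl) h12
    have hC := aligned _ (Or.inr rfl) h12
    unfold ContainedBowtie
    tauto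
  · unfold SplitBowtie
    tauto

lemma symmDiff_singleton_inter_range_sym (hv : v ∈ misalignedNodes k A) :
    symmDiff A {v} ∩ Set.range (sym k) = A ∩ Set.range (sym k) := by
  obtain ⟨i, hvi, -⟩ := hv
  ext w
  simp only [Set.mem_inter_iff, Set.mem_symmDiff, Set.mem_singleton_iff, Set.mem_range]
  constructor
  · rintro ⟨h, j, rfl⟩
    exact ⟨by simpa [sym_ne_of_bowtieB_or_bowtieC hvi j] using h, j, rfl⟩
  · rintro ⟨h, j, rfl⟩
    exact ⟨by simp [sym_ne_of_bowtieB_or_bowtieC hvi j, h], j, rfl⟩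

lemma partWidth_symmDiff_le_of_mem_misalignedNodes (hv : v ∈ misalignedNodes k A) :
    partWidth (PG k) (symmDiff A {v}) ≤ partWidth (PG k) A := by
  obtain ⟨i, hvi, h12, hva⟩ := hv
  apply partWidth_symmDiff_singleton_le
  have hsub : {bowtieA1 k i, bowtieA2 k i} ⊆ oppositeNeighborSet (PG k) A v := by
    rintro u (rfl | rfl)
    · exact ⟨(bowtieA1_adj hvi).symm, by tauto⟩
    · exact ⟨(bowtieA2_adj hvi).symm, by tauto⟩
  have := Set.ncard_le_ncard hsub
  rw [Set.ncard_pair (bowtieA1_ne_bowtieA2 k i)] at this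
  have := ncard_neighborSet_le_four hvi
  omega

lemma ncard_misalignedNodes_symmDiff_lt (hv : v ∈ misalignedNodes k A) :
    (misalignedNodes k (symmDiff A {v})).ncard < (misalignedNodes k A).ncard := by
  refine lt_of_le_of_lt (Set.ncard_le_ncard ?_) (Set.ncard_sdiff_singleton_lt_of_mem hv)
  obtain ⟨i, hvi, -, hva⟩ := hv
  rintro w ⟨j, hwj, h12, hwa⟩
  have hsym : ∀ j', sym k j' ∈ symmDiff A {v} ↔ sym k j' ∈ A := fun j' => by
    simp [Set.mem_symmDiff, sym_ne_of_bowtieB_or_bowtieC hvi j']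
  rw [bowtieA1, bowtieA2, hsym, hsym, ← bowtieA1, ← bowtieA2] at h12
  rw [bowtieA1, hsym, ← bowtieA1] at hwa
  by_cases hwv : w = v
  · subst hwv
    obtain rfl := eq_of_bowtieB_or_bowtieC hvi hwj
    simp only [Set.mem_symmDiff, Set.mem_singleton_iff] at hwa
    tauto
  · simp only [Set.mem_symmDiff, Set.mem_singleton_iff, hwv] at hwa
    exact ⟨⟨j, hwj, h12, by simpa using hwa⟩, hwv⟩

end Misaligned

lemma exists_inter_range_sym_ncard_eq {k m : ℕ} (hm : m ≤ 2 ^ (k + 1)) :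
    ∃ B : Set (PV k), (B ∩ Set.range (sym k)).ncard = m := by
  obtain ⟨B, hB, hcard⟩ := Set.exists_subset_card_eq (s := Set.range (sym k)) (n := m)
    (by rwa [Set.ncard_range_of_injective (sym_injective k), Nat.card_eq_fintype_card,
      Fintype.card_fin])
  exact ⟨B, by rwa [Set.inter_eq_left.2 hB]⟩

/-- For every `n ≥ 1` (written `n = k + 1`) and every `m` with
`0 ≤ m ≤ 2^{n−1} = 2^k`, there exists a minimum-width `m`-partition of the symbol nodes
of the `n`-polar decoding graph `P_n = PG k` in which every bowtie is either split or
contained (i.e. no bowtie is crossing). -/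
theorem exists_min_m_partition_no_crossing_bowtie (k m : ℕ) (hm : m ≤ 2 ^ k) :
    ∃ A : Set (PV k),
      (A ∩ Set.range (sym k)).ncard = m ∧
      (∀ B : Set (PV k), (B ∩ Set.range (sym k)).ncard = m →
        partWidth (PG k) A ≤ partWidth (PG k) B) ∧
      (∀ i : Fin (2 ^ k), SplitBowtie k i A ∨ ContainedBowtie k i A) := by
  set partitions := {B : Set (PV k) | (B ∩ Set.range (sym k)).ncard = m}
  obtain ⟨A₀, hA₀, hA₀_min⟩ := Set.exists_min_image partitions (partWidth (PG k)) (Set.toFinite _)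
    (exists_inter_range_sym_ncard_eq (hm.trans (Nat.pow_le_pow_right two_pos k.le_succ)))
  obtain ⟨A, ⟨hA, hA_width⟩, hA_min⟩ := Set.exists_min_image
    {B ∈ partitions | partWidth (PG k) B ≤ partWidth (PG k) A₀}
    (fun B => (misalignedNodes k B).ncard) (Set.toFinite _) ⟨A₀, hA₀, le_rfl⟩
  refine ⟨A, hA, fun B hB => hA_width.trans (hA₀_min B hB),
    splitBowtie_or_containedBowtie (Set.eq_empty_iff_forall_notMem.2 fun v hv => ?_)⟩
  have hflip : symmDiff A {v} ∈ {B ∈ partitions | partWidth (PG k) B ≤ partWidth (PG k) A₀} :=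
    ⟨(congrArg Set.ncard (symmDiff_singleton_inter_range_sym hv)).trans hA,
      (partWidth_symmDiff_le_of_mem_misalignedNodes hv).trans hA_width⟩
  exact (hA_min _ hflip).not_gt (ncard_misalignedNodes_symmDiff_lt hv)
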